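/- arXiv:2505.02051 — 3 statements merged into one kernel-verified Lean document; each statement's English description precedes it below -/
import Mathlib

section
/- The transitive closure of the relation ≺ on the set S([n],d) of (d+1)-element subsets of [n] is irreflexive, hence defines a strict partial order. In particular there are no cycles I₀ ≺ I₁ ≺ ... ≺ I_r = I₀ of such subsets. -/
/-!
Encode `S ⊆ ℕ` by the set `oddTails S` of positions `p` such that `S` has an odd number of
elements `≥ p`; for `p ∉ S` this says that `p` is an odd gap of `S`, as in Rambau's word over
`{o, *, e}`. If `I ≺ J` with `I \ J = {i}` and `J \ I = {j}`, the tail counts of `I` and `J`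
agree strictly above `max i j`, while at `max i j` the count of `I` is even and that of `J` odd.
So `≺` strictly increases `oddTails` in the colexicographic order, a strict order, which admits
no cycles.
-/

/-- The relation `I ≺ J` on the set `S([n],d)` of `(d+1)`-element subsets of `[n] = {0,...,n}`:
both `I` and `J` are `(d+1)`-element subsets of `[n]` with `|I ∪ J| = d+2`, the unique element
of `J \ I` is an even gap of `I` (i.e. `|{a ∈ I : a > j}|` is even), and the unique element of
`I \ J` is an odd gap of `J` (i.e. `|{a ∈ J : a > i}|` is odd). -/
def Prec (n d : ℕ) (I J : Finset ℕ) : Prop :=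
  I ⊆ Finset.range (n + 1) ∧ J ⊆ Finset.range (n + 1) ∧
    I.card = d + 1 ∧ J.card = d + 1 ∧ (I ∪ J).card = d + 2 ∧
    (∀ j ∈ J \ I, Even ((I.filter (fun a => j < a)).card)) ∧
    (∀ i ∈ I \ J, Odd ((J.filter (fun a => i < a)).card))

open Finset

def tailCard (S : Finset ℕ) (p : ℕ) : ℕ := #{a ∈ S | p ≤ a}

def oddTails (S : Finset ℕ) : Finset ℕ := {p ∈ range (S.sup id + 1) | Odd (tailCard S p)}

lemma tailCard_of_notMem {S : Finset ℕ} {x : ℕ} (hx : x ∉ S) :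
    tailCard S x = #{a ∈ S | x < a} :=
  congrArg card <| filter_congr fun a ha => by
    have : a ≠ x := fun h => hx (h ▸ ha)
    omega

lemma tailCard_insert {S : Finset ℕ} {j : ℕ} (hj : j ∉ S) (p : ℕ) :
    tailCard (insert j S) p = tailCard S p + if p ≤ j then 1 else 0 := by
  unfold tailCard
  rw [filter_insert]
  split_ifs
  · exact card_insert_of_notMem fun h => hj (mem_filter.mp h).1
  · rfl

lemma mem_oddTails {S : Finset ℕ} {p : ℕ} : p ∈ oddTails S ↔ Odd (tailCard S p) := by
  refine ⟨fun h => (mem_filter.mp h).2, fun h => mem_filter.mpr ⟨?_, h⟩⟩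
  obtain ⟨a, ha⟩ := card_pos.mp h.pos
  obtain ⟨haS, hpa⟩ := mem_filter.mp ha
  have : a ≤ S.sup id := le_sup (f := id) haS
  exact mem_range.mpr (by omega)

lemma toColex_oddTails_lt_of_exchange {I J : Finset ℕ} {i j : ℕ} (hiI : i ∈ I) (hiJ : i ∉ J)
    (hjI : j ∉ I) (hU : insert j I = insert i J) (heven : Even #{a ∈ I | j < a})
    (hodd : Odd #{a ∈ J | i < a}) : toColex (oddTails I) < toColex (oddTails J) := by
  have hcount : ∀ p, tailCard I p + (if p ≤ j then 1 else 0) =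
      tailCard J p + (if p ≤ i then 1 else 0) := fun p => by
    rw [← tailCard_insert hjI, ← tailCard_insert hiJ, hU]
  have hagree : ∀ p, max i j < p → tailCard I p = tailCard J p := fun p hp => by
    have := hcount p
    rw [if_neg (by omega), if_neg (by omega)] at this
    exact this
  have hmax : Odd (tailCard J (max i j)) ∧ ¬Odd (tailCard I (max i j)) := by
    have hij : i ≠ j := fun h => hjI (h ▸ hiI)
    rw [← tailCard_of_notMem hjI, Nat.even_iff] at heven
    rw [← tailCard_of_notMem hiJ, Nat.odd_iff] at hodd
    rw [Nat.odd_iff, Nat.odd_iff]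
    rcases hij.lt_or_gt with hlt | hgt
    · have := hcount j
      rw [if_pos le_rfl, if_neg (by omega)] at this
      rw [max_eq_right hlt.le]
      omega
    · have := hcount i
      rw [if_neg (by omega), if_pos le_rfl] at this
      rw [max_eq_left hgt.le]
      omega
  refine Colex.lt_iff_exists_filter_lt.mpr ⟨max i j, ?_, ?_⟩
  · exact mem_sdiff.mpr ⟨mem_oddTails.mpr hmax.1, fun h => hmax.2 (mem_oddTails.mp h)⟩
  · ext p
    simp only [mem_filter, mem_oddTails, and_congr_left_iff]
    exact fun hp => by rw [hagree p hp]

lemma Prec.toColex_oddTails_lt {n d : ℕ} {I J : Finset ℕ} (h : Prec n d I J) :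
    toColex (oddTails I) < toColex (oddTails J) := by
  obtain ⟨-, -, hIc, hJc, hUc, heven, hodd⟩ := h
  obtain ⟨i, hi⟩ : ∃ i, I \ J = {i} := card_eq_one.mp (by have := card_sdiff_add_card I J; omega)
  obtain ⟨j, hj⟩ : ∃ j, J \ I = {j} :=
    card_eq_one.mp (by have := card_sdiff_add_card J I; rw [union_comm] at this; omega)
  have hiIJ : i ∈ I \ J := hi ▸ mem_singleton_self i
  have hjJI : j ∈ J \ I := hj ▸ mem_singleton_self j
  have hU : insert j I = insert i J := by
    rw [← union_singleton, ← hj, union_sdiff_self_eq_union, ← union_singleton, ← hi,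
      union_sdiff_self_eq_union, union_comm]
  exact toColex_oddTails_lt_of_exchange (mem_sdiff.mp hiIJ).1 (mem_sdiff.mp hiIJ).2
    (mem_sdiff.mp hjJI).2 hU (heven j hjJI) (hodd i hiIJ)

/-- Rambau's lemma. The transitive closure of `≺` on `S([n],d)` is
irreflexive, hence a strict partial order; in particular there are no cycles
`I₀ ≺ I₁ ≺ ... ≺ I_r = I₀`. -/
theorem stmt_3 (n d : ℕ) : ∀ I : Finset ℕ, ¬ Relation.TransGen (Prec n d) I I := by
  intro I h
  have hlt :=
    Relation.TransGen.lift (toColex ∘ oddTails) (fun _ _ => Prec.toColex_oddTails_lt) I I h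
  rw [Relation.transGen_eq_self] at hlt
  exact lt_irrefl _ hlt
end

section
/- Let X be a simplicial abelian group whose normalized chain complex C(X) satisfies C(X)_n = 0 for n > m. Then for every n > m, the map X_n → X_{Λ₀ⁿ} restricting to the outer horn Λ₀ⁿ is an isomorphism of abelian groups. -/
/-!
The kernel of the restriction `X_n → X_{Λ₀ⁿ}` is the normalized chain group `C(X)_n`, which
vanishes for `n > m`; this gives injectivity. Surjectivity holds in every simplicial abelian
group (Moore's argument that simplicial groups are Kan): starting from `0`, correct the faces
`d_n, …, d_1` one at a time, replacing `x` by `x - s_p (d_{p+1} x - t_p)`. The identity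
`d_{p+1} s_p = id` fixes face `p + 1`, and for `q > p` the identity `d_{q+1} s_p = s_p d_q`
together with the compatibility of the tuple shows that the higher faces are not disturbed.
-/

open CategoryTheory Simplicial

namespace CategoryTheory.SimplicialObject

variable (X : SimplicialObject AddCommGrpCat) {n : ℕ}

theorem δ_δ_apply {i j : Fin (n + 2)} (h : i ≤ j) (x : X _⦋n + 2⦌) :
    X.δ i (X.δ j.succ x) = X.δ j (X.δ i.castSucc x) := by
  simpa only [ConcreteCategory.comp_apply] using ConcreteCategory.congr_hom (X.δ_comp_δ h) x

theorem δ_succ_σ_apply (i : Fin (n + 1)) (x : X _⦋n⦌) : X.δ i.succ (X.σ i x) = x := by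
  simpa only [ConcreteCategory.comp_apply, ConcreteCategory.id_apply] using
    ConcreteCategory.congr_hom X.δ_comp_σ_succ x

theorem δ_succ_σ_castSucc_apply {i : Fin (n + 2)} {j : Fin (n + 1)} (h : j.castSucc < i)
    (x : X _⦋n + 1⦌) : X.δ i.succ (X.σ j.castSucc x) = X.σ j (X.δ i x) := by
  simpa only [ConcreteCategory.comp_apply] using ConcreteCategory.congr_hom (X.δ_comp_σ_of_gt h) x

/-- `t i` stands for the face `d_{i+1}` of `Λ₀^{n+2}`; the condition is `d_a t_b = d_{b-1} t_a` for
`1 ≤ a < b` in the face numbering, with `a = i + 1` and `b = j + 2`. -/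
def IsOuterHornCompatible (t : Fin (n + 2) → X _⦋n + 1⦌) : Prop :=
  ∀ i j : Fin (n + 1), i ≤ j → X.δ i.succ (t j.succ) = X.δ j.succ (t i.castSucc)

variable {X}

theorem isOuterHornCompatible_δ_succ (x : X _⦋n + 2⦌) :
    X.IsOuterHornCompatible fun i => X.δ i.succ x :=
  fun _ _ h => X.δ_δ_apply (Fin.succ_le_succ_iff.2 h) x

theorem isOuterHornCompatible_iff {t : Fin (n + 2) → X _⦋n + 1⦌} :
    X.IsOuterHornCompatible t ↔
      ∀ (a b : ℕ) (ha : 1 ≤ a) (hab : a < b) (hb : b ≤ n + 2),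
        X.δ (n := n) ⟨a, by lia⟩ (t ⟨b - 1, by lia⟩) =
          X.δ (n := n) ⟨b - 1, by lia⟩ (t ⟨a - 1, by lia⟩) := by
  constructor
  · intro ht a b ha hab hb
    obtain ⟨i, rfl⟩ : ∃ i, a = i + 1 := ⟨a - 1, by omega⟩
    obtain ⟨j, rfl⟩ : ∃ j, b = j + 2 := ⟨b - 2, by omega⟩
    exact ht ⟨i, by omega⟩ ⟨j, by omega⟩ (Fin.mk_le_mk.2 (by omega))
  · intro ht i j hij
    exact ht (i + 1) (j + 2) (by omega) (by simp only [Fin.le_def] at hij; omega) (by omega)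

namespace IsOuterHornCompatible

variable {t : Fin (n + 2) → X _⦋n + 1⦌}

theorem extend_partial_filler (ht : X.IsOuterHornCompatible t) (p : Fin (n + 2))
    {x : X _⦋n + 2⦌} (hx : ∀ q, p < q → X.δ q.succ x = t q) :
    ∃ x' : X _⦋n + 2⦌, ∀ q, p ≤ q → X.δ q.succ x' = t q := by
  refine ⟨x - X.σ p (X.δ p.succ x - t p), fun q hpq => ?_⟩
  rcases hpq.eq_or_lt with rfl | hpq
  · rw [map_sub, X.δ_succ_σ_apply, sub_sub_cancel]
  obtain ⟨q, rfl⟩ := Fin.exists_succ_eq.2 (Fin.ne_zero_of_lt hpq)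
  obtain ⟨p, rfl⟩ := Fin.exists_castSucc_eq.2 (Fin.ne_last_of_lt hpq)
  have hpq' : p ≤ q := Fin.castSucc_lt_succ_iff.1 hpq
  have hface : X.δ q.succ (X.δ p.castSucc.succ x) = X.δ q.succ (t p.castSucc) := by
    rw [← ht p q hpq', ← hx q.succ hpq, Fin.succ_castSucc]
    exact (X.δ_δ_apply (Fin.succ_le_succ_iff.2 hpq') x).symm
  rw [map_sub, X.δ_succ_σ_castSucc_apply hpq, map_sub, hface, sub_self, map_zero, sub_zero,
    hx q.succ hpq]

theorem exists_partial_filler (ht : X.IsOuterHornCompatible t) (p : Fin (n + 3)) :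
    ∃ x : X _⦋n + 2⦌, ∀ q : Fin (n + 2), p ≤ q.castSucc → X.δ q.succ x = t q := by
  induction p using Fin.reverseInduction with
  | last => exact ⟨0, fun q hq => absurd hq (not_le.2 q.castSucc_lt_last)⟩
  | cast p ih =>
    obtain ⟨x, hx⟩ := ih
    exact ht.extend_partial_filler p fun q hq => hx q (Fin.succ_le_castSucc_iff.2 hq)

theorem exists_filler (ht : X.IsOuterHornCompatible t) :
    ∃ x : X _⦋n + 2⦌, (fun i => X.δ i.succ x) = t := by
  obtain ⟨x, hx⟩ := ht.exists_partial_filler 0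
  exact ⟨x, funext fun q => hx q (Fin.zero_le _)⟩

end IsOuterHornCompatible

variable (X)

theorem range_δ_succ :
    Set.range (fun x : X _⦋n + 2⦌ => fun i : Fin (n + 2) => X.δ i.succ x) =
      {t | X.IsOuterHornCompatible t} := by
  ext t
  constructor
  · rintro ⟨x, rfl⟩
    exact isOuterHornCompatible_δ_succ x
  · exact IsOuterHornCompatible.exists_filler

end CategoryTheory.SimplicialObject

/-- Let `X` be a simplicial abelian group whose normalized chain complex
(`C(X)_n = ⋂_{i=1}^{n} ker dᵢ`) vanishes in degrees `n > m`.  Then for every `n > m`, the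
restriction map `X_n → X_{Λ₀ⁿ}`, `x ↦ (d₁x, ..., d_nx)`, is an isomorphism of abelian
groups onto the group of compatible tuples `(x₁,...,x_n)` with `dᵢ x_j = d_{j-1} x_i`
for `1 ≤ i < j ≤ n` (injective with image exactly the compatible tuples). -/
theorem stmt_8 (X : SimplicialObject AddCommGrpCat) (m : ℕ)
    (h1 : ∀ k : ℕ, m < k + 2 → ∀ x : X _⦋k + 2⦌,
        (∀ i : Fin (k + 2), X.δ i.succ x = 0) → x = 0)
    (h2 : m = 0 → ∀ x : X _⦋1⦌, X.δ (1 : Fin 2) x = 0 → x = 0) :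
    (∀ k : ℕ, m < k + 2 →
      Function.Injective
          (fun x : X _⦋k + 2⦌ => fun i : Fin (k + 2) => X.δ i.succ x) ∧
        Set.range (fun x : X _⦋k + 2⦌ => fun i : Fin (k + 2) => X.δ i.succ x) =
          setOf (fun t : Fin (k + 2) → X _⦋k + 1⦌ =>
            ∀ (a b : ℕ), ∀ (ha : 1 ≤ a) (hab : a < b) (hb : b ≤ k + 2),
              X.δ (n := k) ⟨a, by omega⟩ (t ⟨b - 1, by omega⟩) =
                X.δ (n := k) ⟨b - 1, by omega⟩ (t ⟨a - 1, by omega⟩))) ∧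
    (m = 0 →
      Function.Injective (fun x : X _⦋1⦌ => fun _ : Fin 1 => X.δ (1 : Fin 2) x) ∧
        Set.range (fun x : X _⦋1⦌ => fun _ : Fin 1 => X.δ (1 : Fin 2) x) = Set.univ) := by
  refine ⟨fun k hk => ⟨?_, ?_⟩, fun hm => ⟨?_, ?_⟩⟩
  · exact (injective_iff_map_eq_zero (AddMonoidHom.pi fun i : Fin (k + 2) => (X.δ i.succ).hom)).2
      fun x hx => h1 k hk x (congrFun hx)
  · rw [SimplicialObject.range_δ_succ]
    exact Set.ext fun t => SimplicialObject.isOuterHornCompatible_iff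
  · exact (injective_iff_map_eq_zero (AddMonoidHom.pi fun _ : Fin 1 => (X.δ (1 : Fin 2)).hom)).2
      fun x hx => h2 hm x (congrFun hx 0)
  · exact Set.eq_univ_of_forall fun t =>
      ⟨X.σ 0 (t 0), funext fun i => by rw [Subsingleton.elim i 0]; exact X.δ_succ_σ_apply 0 _⟩
end

section
/- Let X : Δᵒᵖ → C be a simplicial object in a category C with finite limits, satisfying the (lower 1-) Segal condition: for all n ≥ 2, the map X_n → X_{\{0,1\}} ×_{X_{\{1\}}} X_{\{1,2\}} ×_{X_{\{2\}}} ⋯ ×_{X_{\{n-1\}}} X_{\{n-1,n\}} is an isomorphism. Then for every 0 ≤ k ≤ n, the square with vertices X_{[n]}, X_{\{0,...,k\}}, X_{\{k,...,n\}}, X_{\{k\}} (maps induced by the inclusions of the subsets into [n] and of {k} into both intervals) is a pullback square in C. -/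
/-!
For `0 < k` and `0 < l` the edges of `[k + l]` are the edges of `{0, …, k}` followed by those of
`{k, …, k + l}`. A map into `X_{k+l}` is determined by its edges, which gives uniqueness, and the
Segal condition applied to the concatenated edge family of two maps into `X_k` and `X_l` that
agree on `X_{{k}}` gives existence. If `k = 0` or `l = 0`, two parallel sides of the square are
isomorphisms.
-/

open CategoryTheory Simplicial

/-- The edge `X_n → X_1` of a simplicial object corresponding to `{i, i+1} ⊆ [n]`. -/
def edgeMap {C : Type*} [Category C] (X : SimplicialObject C) {n : ℕ} (i : Fin n) :
    X _⦋n⦌ ⟶ X _⦋1⦌ :=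
  X.map (SimplexCategory.mkOfLe i.castSucc i.succ (Fin.castSucc_lt_succ (i := i)).le).op

/-- The vertex `X_1 → X_0` corresponding to `{i} ⊆ [1]`. -/
def vertexMap {C : Type*} [Category C] (X : SimplicialObject C) (i : Fin 2) :
    X _⦋1⦌ ⟶ X _⦋0⦌ :=
  X.map (SimplexCategory.const (SimplexCategory.mk 0) (SimplexCategory.mk 1) i).op

theorem Fin.append_rel_castSucc_succ {α : Sort*} (R : α → α → Prop) {m n : ℕ}
    {u : Fin (m + 1) → α} {v : Fin (n + 1) → α}
    (hu : ∀ i : Fin m, R (u i.castSucc) (u i.succ)) (huv : R (u (Fin.last m)) (v 0))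
    (hv : ∀ i : Fin n, R (v i.castSucc) (v i.succ)) (i : Fin (m + 1 + n)) :
    R (Fin.append u v i.castSucc) (Fin.append u v i.succ) := by
  refine Fin.addCases (fun j => ?_) (fun j => ?_) i
  · refine Fin.lastCases ?_ (fun j => ?_) j
    · exact (Fin.append_left u v _).symm ▸ (Fin.append_right u v 0).symm ▸ huv
    · exact (Fin.append_left u v j.castSucc).symm ▸ (Fin.append_left u v j.succ).symm ▸ hu j
  · exact (Fin.append_right u v j.castSucc).symm ▸ (Fin.append_right u v j.succ).symm ▸ hv j

theorem CategoryTheory.IsPullback.of_forall_exists_lift {C : Type*} [Category C]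
    {P A B Z : C} {fst : P ⟶ A} {snd : P ⟶ B} {f : A ⟶ Z} {g : B ⟶ Z}
    (sq : CommSq fst snd f g)
    (lift : ∀ (T : C) (a : T ⟶ A) (b : T ⟶ B), a ≫ f = b ≫ g →
      ∃ l : T ⟶ P, l ≫ fst = a ∧ l ≫ snd = b)
    (hom_ext : ∀ (T : C) (l l' : T ⟶ P), l ≫ fst = l' ≫ fst → l ≫ snd = l' ≫ snd → l = l') :
    IsPullback fst snd f g := by
  choose lift lift_fst lift_snd using lift
  exact .of_isLimit' sq <| Limits.PullbackCone.IsLimit.mk sq.w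
    (fun s => lift s.pt s.fst s.snd s.condition)
    (fun s => lift_fst s.pt s.fst s.snd s.condition)
    (fun s => lift_snd s.pt s.fst s.snd s.condition)
    (fun s m h₁ h₂ => hom_ext _ _ _ (h₁.trans (lift_fst ..).symm) (h₂.trans (lift_snd ..).symm))

lemma SimplexCategory.isIso_hom_zero_zero (f : ⦋0⦌ ⟶ ⦋0⦌) : IsIso f :=
  hom_zero_zero f ▸ inferInstance

namespace CategoryTheory.SimplicialObject

open SimplexCategory

variable {C : Type*} [Category C] (X : SimplicialObject C)

def EdgesCompatible {T : C} {n : ℕ} (g : Fin (n + 1) → (T ⟶ X _⦋1⦌)) : Prop :=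
  ∀ i : Fin n, g i.castSucc ≫ vertexMap X 1 = g i.succ ≫ vertexMap X 0

def IsSegal : Prop :=
  ∀ (j : ℕ) (T : C) (g : Fin (j + 2) → (T ⟶ X _⦋1⦌)), EdgesCompatible X g →
    ∃! f : T ⟶ X _⦋j + 2⦌, ∀ i, f ≫ edgeMap X i = g i

lemma edgeMap_eq_map_mkOfSucc {n : ℕ} (i : Fin n) : edgeMap X i = X.map (mkOfSucc i).op :=
  rfl

lemma edgeMap_zero_eq_id : edgeMap X (0 : Fin 1) = 𝟙 _ := by
  rw [edgeMap_eq_map_mkOfSucc, mkOfSucc_eq_id, op_id, X.map_id]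

lemma edgeMap_comp_vertexMap_one {n : ℕ} (i : Fin n) :
    edgeMap X i ≫ vertexMap X 1 = X.map (SimplexCategory.const ⦋0⦌ ⦋n⦌ i.succ).op := by
  rw [edgeMap, vertexMap, ← X.map_comp, ← op_comp, const_comp]
  rfl

lemma edgeMap_comp_vertexMap_zero {n : ℕ} (i : Fin n) :
    edgeMap X i ≫ vertexMap X 0 = X.map (SimplexCategory.const ⦋0⦌ ⦋n⦌ i.castSucc).op := by
  rw [edgeMap, vertexMap, ← X.map_comp, ← op_comp, const_comp]
  rfl

lemma edgesCompatible_comp_edgeMap {T : C} {n : ℕ} (f : T ⟶ X _⦋n + 1⦌) :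
    EdgesCompatible X fun i => f ≫ edgeMap X i := by
  intro i
  rw [Category.assoc, Category.assoc, edgeMap_comp_vertexMap_one, edgeMap_comp_vertexMap_zero,
    Fin.succ_castSucc]

lemma EdgesCompatible.append {T : C} {m n : ℕ} {g : Fin (m + 1) → (T ⟶ X _⦋1⦌)}
    {g' : Fin (n + 1) → (T ⟶ X _⦋1⦌)} (hg : EdgesCompatible X g) (hg' : EdgesCompatible X g')
    (h : g (Fin.last m) ≫ vertexMap X 1 = g' 0 ≫ vertexMap X 0) :
    EdgesCompatible X (n := m + 1 + n)
      (Fin.append g g' : Fin (m + 1 + (n + 1)) → (T ⟶ X _⦋1⦌)) :=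
  Fin.append_rel_castSucc_succ (fun a b => a ≫ vertexMap X 1 = b ≫ vertexMap X 0) hg h hg'

lemma map_subinterval_comp_edgeMap {n : ℕ} (j l : ℕ) (h : j + l ≤ n) (i : Fin l) :
    X.map (subinterval j l h).op ≫ edgeMap X i = edgeMap X ⟨j + i, by omega⟩ := by
  rw [edgeMap_eq_map_mkOfSucc, edgeMap_eq_map_mkOfSucc, ← X.map_comp, ← op_comp,
    mkOfSucc_subinterval_eq]

lemma commSq_subinterval (k l : ℕ) :
    CommSq (X.map (subinterval 0 k (by omega) : ⦋k⦌ ⟶ ⦋k + l⦌).op)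
      (X.map (subinterval k l le_rfl).op) (X.map (SimplexCategory.const ⦋0⦌ ⦋k⦌ (Fin.last k)).op)
      (X.map (SimplexCategory.const ⦋0⦌ ⦋l⦌ 0).op) := by
  constructor
  rw [← X.map_comp, ← X.map_comp, ← op_comp, ← op_comp, const_subinterval_eq,
    const_subinterval_eq]
  simp

lemma isPullback_subinterval_zero_left (l : ℕ) :
    IsPullback (X.map (subinterval 0 0 (by omega) : ⦋0⦌ ⟶ ⦋0 + l⦌).op)
      (X.map (subinterval 0 l le_rfl).op) (X.map (SimplexCategory.const ⦋0⦌ ⦋0⦌ (Fin.last 0)).op)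
      (X.map (SimplexCategory.const ⦋0⦌ ⦋l⦌ 0).op) := by
  have : IsIso (subinterval 0 l le_rfl : ⦋l⦌ ⟶ ⦋0 + l⦌) :=
    isIso_of_bijective (finCongr (zero_add _).symm).bijective
  have := isIso_hom_zero_zero (SimplexCategory.const ⦋0⦌ ⦋0⦌ (Fin.last 0))
  exact .of_vert_isIso (commSq_subinterval X 0 l)

lemma isPullback_subinterval_zero_right (k : ℕ) :
    IsPullback (X.map (subinterval 0 k (by omega) : ⦋k⦌ ⟶ ⦋k + 0⦌).op)
      (X.map (subinterval k 0 le_rfl).op) (X.map (SimplexCategory.const ⦋0⦌ ⦋k⦌ (Fin.last k)).op)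
      (X.map (SimplexCategory.const ⦋0⦌ ⦋0⦌ 0).op) := by
  have : IsIso (subinterval 0 k (by omega) : ⦋k⦌ ⟶ ⦋k + 0⦌) :=
    isIso_of_bijective Function.bijective_id
  have := isIso_hom_zero_zero (SimplexCategory.const ⦋0⦌ ⦋0⦌ 0)
  exact .of_horiz_isIso (commSq_subinterval X k 0)

namespace IsSegal

variable {X}

lemma existsUnique_of_edgesCompatible (hX : X.IsSegal) {T : C} {n : ℕ}
    (g : Fin (n + 1) → (T ⟶ X _⦋1⦌)) (hg : EdgesCompatible X g) :
    ∃! f : T ⟶ X _⦋n + 1⦌, ∀ i, f ≫ edgeMap X i = g i := by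
  cases n with
  | zero =>
    refine ⟨g 0, fun i => ?_, fun f hf => ?_⟩
    · rw [Fin.fin_one_eq_zero i, edgeMap_zero_eq_id, Category.comp_id]
    · rw [← hf 0, edgeMap_zero_eq_id, Category.comp_id]
  | succ j => exact hX j T g hg

lemma hom_ext (hX : X.IsSegal) {T : C} {n : ℕ} {f f' : T ⟶ X _⦋n + 1⦌}
    (h : ∀ i, f ≫ edgeMap X i = f' ≫ edgeMap X i) : f = f' :=
  (hX.existsUnique_of_edgesCompatible _ (edgesCompatible_comp_edgeMap X f')).unique h fun _ => rfl

lemma hom_ext_subinterval (hX : X.IsSegal) {T : C} {k l : ℕ} {f f' : T ⟶ X _⦋k + (l + 1)⦌}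
    (h₁ : f ≫ X.map (subinterval 0 k (by omega)).op = f' ≫ X.map (subinterval 0 k (by omega)).op)
    (h₂ : f ≫ X.map (subinterval k (l + 1) le_rfl).op
      = f' ≫ X.map (subinterval k (l + 1) le_rfl).op) :
    f = f' := by
  refine hX.hom_ext fun i => Fin.addCases (m := k) (n := l + 1) (fun j => ?_) (fun j => ?_) i
  · have h : edgeMap X (Fin.castAdd (l + 1) j)
        = X.map (subinterval 0 k (by omega)).op ≫ edgeMap X j := by
      rw [map_subinterval_comp_edgeMap]
      congr 1
      ext
      simp
    rw [h, reassoc_of% h₁]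
  · have h : edgeMap X (Fin.natAdd k j) = X.map (subinterval k (l + 1) le_rfl).op ≫ edgeMap X j :=
      (map_subinterval_comp_edgeMap X k (l + 1) le_rfl j).symm
    rw [h, reassoc_of% h₂]

lemma exists_lift_subinterval (hX : X.IsSegal) {T : C} {k l : ℕ} (a : T ⟶ X _⦋k + 1⦌)
    (b : T ⟶ X _⦋l + 1⦌)
    (hab : a ≫ X.map (SimplexCategory.const ⦋0⦌ ⦋k + 1⦌ (Fin.last (k + 1))).op
      = b ≫ X.map (SimplexCategory.const ⦋0⦌ ⦋l + 1⦌ 0).op) :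
    ∃ f : T ⟶ X _⦋k + 1 + (l + 1)⦌, f ≫ X.map (subinterval 0 (k + 1) (by omega)).op = a ∧
      f ≫ X.map (subinterval (k + 1) (l + 1) le_rfl).op = b := by
  have hg := (edgesCompatible_comp_edgeMap X a).append X (edgesCompatible_comp_edgeMap X b) (by
    rw [Category.assoc, Category.assoc, edgeMap_comp_vertexMap_one, edgeMap_comp_vertexMap_zero,
      Fin.succ_last, Fin.castSucc_zero]
    exact hab)
  obtain ⟨f, hf, -⟩ := hX.existsUnique_of_edgesCompatible _ hg
  refine ⟨f, hX.hom_ext fun i => ?_, hX.hom_ext fun i => ?_⟩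
  · have hi : (⟨0 + i, by omega⟩ : Fin (k + 1 + (l + 1))) = Fin.castAdd (l + 1) i := by
      ext
      simp
    rw [Category.assoc, map_subinterval_comp_edgeMap, hi, hf, Fin.append_left]
  · rw [Category.assoc, map_subinterval_comp_edgeMap]
    exact (hf _).trans (Fin.append_right _ _ i)

theorem isPullback_subinterval (hX : X.IsSegal) (k l : ℕ) :
    IsPullback (X.map (subinterval 0 k (by omega) : ⦋k⦌ ⟶ ⦋k + l⦌).op)
      (X.map (subinterval k l le_rfl).op) (X.map (SimplexCategory.const ⦋0⦌ ⦋k⦌ (Fin.last k)).op)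
      (X.map (SimplexCategory.const ⦋0⦌ ⦋l⦌ 0).op) := by
  cases k with
  | zero => exact isPullback_subinterval_zero_left X l
  | succ k =>
    cases l with
    | zero => exact isPullback_subinterval_zero_right X (k + 1)
    | succ l =>
      exact .of_forall_exists_lift (commSq_subinterval X (k + 1) (l + 1))
        (fun _ a b hab => hX.exists_lift_subinterval a b hab)
        (fun _ _ _ h₁ h₂ => hX.hom_ext_subinterval h₁ h₂)

end IsSegal

end CategoryTheory.SimplicialObject

/-- Let `X : Δᵒᵖ → C` be a simplicial object in a category `C` with finite
limits satisfying the (lower 1-)Segal condition: for all `n ≥ 2`, the canonical map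
`X_n → X_{01} ×_{X_1} X_{12} ×_{X_2} ⋯ ×_{X_{n-1}} X_{n-1,n}` is an isomorphism (formulated
via its universal property: maps `T → X_n` correspond bijectively to compatible families of
edges `T → X_1`).  Then for every `0 ≤ k ≤ n` (here `n = k + l`), the square with vertices
`X_{[n]}`, `X_{{0,...,k}}`, `X_{{k,...,n}}`, `X_{{k}}`, with maps induced by the inclusions
of the subsets into `[n]` and of `{k}` into both intervals, is a pullback square in `C`. -/
theorem stmt_15 {C : Type*} [Category C]
    (X : SimplicialObject C)
    (hSegal : ∀ (j : ℕ) (T : C) (g : Fin (j + 2) → (T ⟶ X _⦋1⦌)),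
      (∀ i : Fin (j + 1), g i.castSucc ≫ vertexMap X 1 = g i.succ ≫ vertexMap X 0) →
      ∃! f : T ⟶ X _⦋j + 2⦌, ∀ i : Fin (j + 2), f ≫ edgeMap X i = g i) :
    ∀ k l : ℕ, IsPullback
      (X.map (SimplexCategory.mkHom
        ⟨Fin.castLE (by omega : k + 1 ≤ k + l + 1), fun _ _ h => h⟩).op)
      (X.map (SimplexCategory.mkHom
        ⟨fun i : Fin (l + 1) => (⟨k + (i : ℕ), by have := i.isLt; omega⟩ : Fin (k + l + 1)),
          fun a b hab => Nat.add_le_add_left hab k⟩).op)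
      (X.map (SimplexCategory.const (SimplexCategory.mk 0) (SimplexCategory.mk k)
        (Fin.last k)).op)
      (X.map (SimplexCategory.const (SimplexCategory.mk 0) (SimplexCategory.mk l) 0).op) := by
  intro k l
  -- the second map of the square is `subinterval k l` only up to `k + i = i + k`
  convert SimplicialObject.IsSegal.isPullback_subinterval hSegal k l using 4
  · rfl
  · ext i
    exact Nat.add_comm _ _
end
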